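/- (Rüssmann-type sublevel estimate.) Let $d \ge 1$ be an integer, $I \subset \mathbb{R}$ a bounded interval, and $\Gamma : I \to \mathbb{R}$ a $C^d$ function such that $|\Gamma^{(d)}(s)| \ge c > 0$ for all $s \in I$. Then for every $\eta > 0$, the Lebesgue measure of the sublevel set $\{s \in I : |\Gamma(s)| < \eta\}$ is at most $C(d)\,(\eta/c)^{1/d}$ for a constant $C(d)$ depending only on $d$ (and the length of $I$). -/

import Mathlib

/-!
Induction on `d`. For `d = 1` the derivative has constant sign by Darboux's theorem, so
`c |y - x| ≤ |Γ y - Γ x|` and the sublevel set has diameter at most `2η/c`. For the step put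
`r = (η/c)^{1/(d+1)}` and `δ = c r`. Where `|Γ^{(d)}| < δ`, the case `d = 1` applied to `Γ^{(d)}`
bounds the measure by `2r`. The rest lies in `{Γ^{(d)} ≥ δ}` and `{Γ^{(d)} ≤ -δ}`, which are
intervals since `Γ^{(d)}` is monotone, and on each of them the induction hypothesis gives
`4^d (η/δ)^{1/d} = 4^d r`.
-/

open MeasureTheory Set

section DerivBounds

variable {s : Set ℝ} {g g' : ℝ → ℝ} {c : ℝ}

theorem Set.OrdConnected.le_deriv_or_le_neg_deriv (hs : s.OrdConnected)
    (hg : ∀ x ∈ s, HasDerivWithinAt g (g' x) s x) (hc : 0 < c) (hg' : ∀ x ∈ s, c ≤ |g' x|) :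
    (∀ x ∈ s, c ≤ g' x) ∨ (∀ x ∈ s, c ≤ -g' x) := by
  by_contra! ⟨⟨x, hx, hxc⟩, ⟨y, hy, hyc⟩⟩
  have hx' : g' x ≤ -c := by cases abs_cases (g' x) <;> linarith [hg' x hx]
  have hy' : c ≤ g' y := by cases abs_cases (g' y) <;> linarith [hg' y hy]
  obtain ⟨z, hz, hz0⟩ : (0 : ℝ) ∈ g' '' s :=
    (hs.image_hasDerivWithinAt hg).out (mem_image_of_mem g' hx) (mem_image_of_mem g' hy)
      ⟨by linarith, by linarith⟩
  have := hg' z hz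
  rw [hz0, abs_zero] at this
  linarith

theorem Set.OrdConnected.mul_sub_le_sub_of_le_deriv (hs : s.OrdConnected)
    (hg : ∀ x ∈ s, HasDerivWithinAt g (g' x) s x) (hg' : ∀ x ∈ s, c ≤ g' x)
    {x y : ℝ} (hx : x ∈ s) (hy : y ∈ s) (hxy : x ≤ y) : c * (y - x) ≤ g y - g x := by
  have hmono : MonotoneOn (fun x => g x - c * x) s := by
    refine monotoneOn_of_hasDerivWithinAt_nonneg (f' := fun x => g' x - c * 1) hs.convex
      (fun x hx => ((hg x hx).sub ((hasDerivWithinAt_id x s).const_mul c)).continuousWithinAt)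
      (fun x hx => ?_) (fun x hx => ?_)
    · exact (((hg x (interior_subset hx)).sub ((hasDerivWithinAt_id x s).const_mul c)).mono
        interior_subset)
    · linarith [hg' x (interior_subset hx)]
  linarith [hmono hx hy hxy]

theorem Set.OrdConnected.mul_abs_sub_le_abs_sub_of_le_abs_deriv (hs : s.OrdConnected)
    (hg : ∀ x ∈ s, HasDerivWithinAt g (g' x) s x) (hc : 0 < c) (hg' : ∀ x ∈ s, c ≤ |g' x|)
    {x y : ℝ} (hx : x ∈ s) (hy : y ∈ s) : c * |y - x| ≤ |g y - g x| := by
  wlog hxy : x ≤ y generalizing x y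
  · rw [abs_sub_comm y, abs_sub_comm (g y)]
    exact this hy hx (le_of_not_ge hxy)
  rw [abs_of_nonneg (sub_nonneg.2 hxy)]
  rcases hs.le_deriv_or_le_neg_deriv hg hc hg' with hpos | hneg
  · exact (hs.mul_sub_le_sub_of_le_deriv hg hpos hx hy hxy).trans (le_abs_self _)
  · have := hs.mul_sub_le_sub_of_le_deriv (fun x hx => (hg x hx).neg) hneg hx hy hxy
    simp only [Pi.neg_apply] at this
    linarith [neg_le_abs (g y - g x)]

theorem Set.OrdConnected.volume_sublevel_le_of_le_abs_deriv (hs : s.OrdConnected)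
    (hg : ∀ x ∈ s, HasDerivWithinAt g (g' x) s x) (hc : 0 < c) (hg' : ∀ x ∈ s, c ≤ |g' x|)
    (η : ℝ) : volume {x ∈ s | |g x| < η} ≤ ENNReal.ofReal (2 * η / c) := by
  refine (Real.volume_le_diam _).trans (Metric.ediam_le_of_forall_dist_le fun x hx y hy => ?_)
  rw [Real.dist_eq, le_div_iff₀ hc, mul_comm, abs_sub_comm]
  calc c * |y - x| ≤ |g y - g x| := hs.mul_abs_sub_le_abs_sub_of_le_abs_deriv hg hc hg' hx.1 hy.1
    _ ≤ |g y| + |g x| := abs_sub _ _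
    _ ≤ 2 * η := by linarith [hx.2, hy.2]

theorem Set.OrdConnected.monotoneOn_or_antitoneOn_of_le_abs_deriv (hs : s.OrdConnected)
    (hg : ∀ x ∈ s, HasDerivWithinAt g (g' x) s x) (hc : 0 < c) (hg' : ∀ x ∈ s, c ≤ |g' x|) :
    MonotoneOn g s ∨ AntitoneOn g s := by
  rcases hs.le_deriv_or_le_neg_deriv hg hc hg' with hpos | hneg
  · refine .inl fun x hx y hy hxy => ?_
    nlinarith [hs.mul_sub_le_sub_of_le_deriv hg hpos hx hy hxy]
  · refine .inr fun x hx y hy hxy => ?_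
    have := hs.mul_sub_le_sub_of_le_deriv (fun x hx => (hg x hx).neg) hneg hx hy hxy
    simp only [Pi.neg_apply] at this
    nlinarith

theorem Set.OrdConnected.sep_le_of_monotoneOn_or_antitoneOn (hs : s.OrdConnected)
    (hg : MonotoneOn g s ∨ AntitoneOn g s) (t : ℝ) : {x ∈ s | t ≤ g x}.OrdConnected := by
  refine ⟨fun x hx y hy z hz => ?_⟩
  have hzs : z ∈ s := hs.out hx.1 hy.1 hz
  rcases hg with hmono | hanti
  · exact ⟨hzs, hx.2.trans (hmono hx.1 hzs hz.1)⟩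
  · exact ⟨hzs, hy.2.trans (hanti hzs hy.1 hz.2)⟩

end DerivBounds

def HasDerivChainOn (f : ℕ → ℝ → ℝ) (d : ℕ) (s : Set ℝ) : Prop :=
  ∀ i < d, ∀ x ∈ s, HasDerivWithinAt (f i) (f (i + 1) x) s x

namespace HasDerivChainOn

variable {f : ℕ → ℝ → ℝ} {d : ℕ} {s t : Set ℝ}

theorem mono (hf : HasDerivChainOn f d s) (hts : t ⊆ s) : HasDerivChainOn f d t :=
  fun i hi x hx => (hf i hi x (hts hx)).mono hts

theorem of_succ (hf : HasDerivChainOn f (d + 1) s) : HasDerivChainOn f d s :=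
  fun i hi => hf i (hi.trans (Nat.lt_succ_self d))

end HasDerivChainOn

theorem hasDerivChainOn_iteratedDerivWithin {Γ : ℝ → ℝ} {d : ℕ} {s : Set ℝ}
    (hΓ : ContDiffOn ℝ d Γ s) (hs : UniqueDiffOn ℝ s) :
    HasDerivChainOn (fun i => iteratedDerivWithin i Γ s) d s := fun i hi x hx => by
  simp only [iteratedDerivWithin_succ]
  exact (hΓ.differentiableOn_iteratedDerivWithin (by exact_mod_cast hi) hs x hx).hasDerivWithinAt

theorem sep_abs_lt_subset_union (s : Set ℝ) (g h : ℝ → ℝ) (η δ : ℝ) :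
    {x ∈ s | |g x| < η} ⊆ {x ∈ s | |h x| < δ} ∪ {x ∈ {x ∈ s | δ ≤ h x} | |g x| < η} ∪
      {x ∈ {x ∈ s | δ ≤ (-h) x} | |g x| < η} := by
  rintro x ⟨hxs, hx⟩
  rcases lt_or_ge |h x| δ with hlt | hge
  · exact .inl (.inl ⟨hxs, hlt⟩)
  rcases le_abs'.1 hge with hneg | hpos
  · exact .inr ⟨⟨hxs, le_neg.1 hneg⟩, hx⟩
  · exact .inl (.inr ⟨⟨hxs, hpos⟩, hx⟩)

theorem Real.rpow_div_rpow_one_div_add_one {x : ℝ} (hx : 0 < x) {n : ℝ} (hn : 0 < n) :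
    (x / x ^ (1 / (n + 1))) ^ (1 / n) = x ^ (1 / (n + 1)) := by
  rw [← Real.rpow_one_sub' hx.le, ← Real.rpow_mul hx.le]
  · congr 1; field_simp; ring
  · refine (sub_pos.2 ?_).ne'
    rw [div_lt_one (by linarith)]
    linarith

theorem Set.OrdConnected.volume_sublevel_le_of_hasDerivChainOn {d : ℕ} (hd : 1 ≤ d)
    {f : ℕ → ℝ → ℝ} {η : ℝ} (hη : 0 < η) {s : Set ℝ} {c : ℝ} (hs : s.OrdConnected)
    (hf : HasDerivChainOn f d s) (hc : 0 < c) (htop : ∀ x ∈ s, c ≤ |f d x|) :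
    volume {x ∈ s | |f 0 x| < η} ≤ ENNReal.ofReal (4 ^ d * (η / c) ^ ((1 : ℝ) / d)) := by
  induction d, hd using Nat.le_induction generalizing s c with
  | base =>
    refine (hs.volume_sublevel_le_of_le_abs_deriv (hf 0 one_pos) hc htop η).trans
      (ENNReal.ofReal_le_ofReal ?_)
    rw [Nat.cast_one, div_one, Real.rpow_one, pow_one]
    linarith [div_pos hη hc, mul_div_assoc 2 η c]
  | succ d hd ih =>
    have hder := hf d (Nat.lt_succ_self d)
    set r := (η / c) ^ ((1 : ℝ) / (d + 1)) with hr
    have hr0 : 0 < r := Real.rpow_pos_of_pos (div_pos hη hc) _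
    have hδ : 0 < c * r := mul_pos hc hr0
    have hηδ : (η / (c * r)) ^ ((1 : ℝ) / d) = r := by
      rw [← div_div, hr]
      exact Real.rpow_div_rpow_one_div_add_one (div_pos hη hc) (by exact_mod_cast hd)
    have hmono := hs.monotoneOn_or_antitoneOn_of_le_abs_deriv hder hc htop
    have hR := hs.sep_le_of_monotoneOn_or_antitoneOn hmono (c * r)
    have hL := hs.sep_le_of_monotoneOn_or_antitoneOn
      (hmono.imp MonotoneOn.neg AntitoneOn.neg).symm (c * r)
    have hB := hs.volume_sublevel_le_of_le_abs_deriv hder hc htop (c * r)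
    have hvR := ih hR (hf.of_succ.mono (sep_subset _ _)) hδ (fun x hx => hx.2.trans (le_abs_self _))
    have hvL := ih hL (hf.of_succ.mono (sep_subset _ _)) hδ (fun x hx => hx.2.trans (neg_le_abs _))
    rw [hηδ] at hvR hvL
    rw [mul_div_assoc, mul_div_cancel_left₀ _ hc.ne'] at hB
    calc volume {x ∈ s | |f 0 x| < η}
        ≤ ENNReal.ofReal (2 * r) + ENNReal.ofReal (4 ^ d * r) + ENNReal.ofReal (4 ^ d * r) :=
          (measure_mono (sep_abs_lt_subset_union s (f 0) (f d) η (c * r))).trans <|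
            (measure_union_le _ _).trans <|
              add_le_add ((measure_union_le _ _).trans (add_le_add hB hvR)) hvL
      _ ≤ ENNReal.ofReal (4 ^ (d + 1) * (η / c) ^ ((1 : ℝ) / ↑(d + 1))) := by
          rw [← ENNReal.ofReal_add (by positivity) (by positivity),
            ← ENNReal.ofReal_add (by positivity) (by positivity), Nat.cast_succ, ← hr]
          refine ENNReal.ofReal_le_ofReal ?_
          have h4 : (4 : ℝ) ≤ 4 ^ d := le_self_pow₀ (by norm_num) (by omega)
          rw [pow_succ]
          nlinarith

/-- Rüssmann-type sublevel estimate: if `Γ : [a,b] → ℝ` is `C^d` with `|Γ^{(d)}| ≥ c > 0` on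
`[a,b]`, then for every `η > 0` the sublevel set `{s ∈ [a,b] : |Γ s| < η}` has Lebesgue measure
at most `C(d) (η/c)^{1/d}`, with `C` depending only on `d` (and the length of the interval). -/
theorem russmann_sublevel (d : ℕ) (hd : 1 ≤ d) (a b : ℝ) (hab : a < b) :
    ∃ C : ℝ, 0 < C ∧
      ∀ (Γ : ℝ → ℝ) (c η : ℝ), 0 < c → 0 < η →
        ContDiffOn ℝ d Γ (Set.Icc a b) →
        (∀ s ∈ Set.Icc a b, c ≤ |iteratedDerivWithin d Γ (Set.Icc a b) s|) →
        volume {s ∈ Set.Icc a b | |Γ s| < η} ≤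
          ENNReal.ofReal (C * (η / c) ^ ((1 : ℝ) / d)) := by
  refine ⟨4 ^ d, by positivity, fun Γ c η hc hη hΓ htop => ?_⟩
  simpa using ordConnected_Icc.volume_sublevel_le_of_hasDerivChainOn hd hη
    (hasDerivChainOn_iteratedDerivWithin hΓ (uniqueDiffOn_Icc hab)) hc htop
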